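/- L² bound of the angular spectrum representation on horizontal lines: for every a ≥ h, the restriction x₁ ↦ u(x₁, a) is square integrable on ℝ and ∫_ℝ |u(x₁, a)|² dx₁ ≤ 2π ∫_ℝ |F(ξ)|² dξ. -/

import Mathlib

/-!
On the line `x₂ = a` the angular spectrum representation is, after the substitution
`x₁ = -2π w`, the Fourier transform of `G(ξ) = exp(i(a - h) ρ(k² - ξ²)) F(ξ)`, and `|G| ≤ |F|`
because `Im ρ ≥ 0`. Plancherel's theorem for the `L¹ ∩ L²` function `G` then gives
`∫ |u(x₁, a)|² dx₁ = 2π ∫ |G|² ≤ 2π ∫ |F|²`. Mathlib's Plancherel theorem concerns the `L²`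
extension of the Fourier transform; it agrees a.e. with the Fourier integral of `G` because both
define the same tempered distribution.
-/

open MeasureTheory

/-- The branch of the complex square root used for the upper half plane:
`ρ(w) := √((|w| + Re w)/2) + i √((|w| − Re w)/2)`; for `Im w ≥ 0` it satisfies
`ρ(w)² = w`, `Re ρ(w) ≥ 0` and `Im ρ(w) ≥ 0`. -/
noncomputable def rho (w : ℂ) : ℂ :=
  (Real.sqrt ((‖w‖ + w.re) / 2) : ℝ) +
    Complex.I * (Real.sqrt ((‖w‖ - w.re) / 2) : ℝ)

/-- The angular spectrum representation
`u(x₁,x₂) = ∫ exp(i((x₂−h) ρ(k²−ξ²) + x₁ ξ)) F(ξ) dξ`. -/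
noncomputable def asr (k : ℂ) (h : ℝ) (F : SchwartzMap ℝ ℂ) (p : ℝ × ℝ) : ℂ :=
  ∫ ξ : ℝ, Complex.exp (Complex.I *
    (((p.2 - h : ℝ) : ℂ) * rho (k ^ 2 - (ξ : ℂ) ^ 2) + (p.1 : ℂ) * (ξ : ℂ))) * F ξ

open Complex FourierTransform SchwartzMap
open scoped ContDiff

section Plancherel

variable {V F : Type*} [NormedAddCommGroup V] [InnerProductSpace ℝ V] [FiniteDimensional ℝ V]
  [MeasurableSpace V] [BorelSpace V]
  [NormedAddCommGroup F] [InnerProductSpace ℂ F] [CompleteSpace F]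

theorem ae_eq_of_forall_integral_schwartz_smul_eq {f f' : V → F}
    (hf : LocallyIntegrable f) (hf' : LocallyIntegrable f')
    (h : ∀ ψ : 𝓢(V, ℂ), ∫ x, ψ x • f x = ∫ x, ψ x • f' x) : f =ᵐ[volume] f' := by
  refine ae_eq_of_integral_contDiff_smul_eq hf hf' fun φ hφ hφc => ?_
  have hψc : HasCompactSupport (ofRealCLM ∘ φ) := hφc.comp_left rfl
  have hψ : ContDiff ℝ ∞ (ofRealCLM ∘ φ) := by fun_prop
  simpa [Complex.coe_smul] using h (hψc.toSchwartzMap hψ)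

theorem integral_fourier_smul_eq_of_integrable (ψ : 𝓢(V, ℂ)) {G : V → F} (hG : Integrable G) :
    ∫ ξ, 𝓕 ψ ξ • G ξ = ∫ x, ψ x • 𝓕 G x := by
  simpa using! VectorFourier.integral_fourierIntegral_smul_eq_flip (L := innerₗ V)
    Real.continuous_fourierChar continuous_inner ψ.integrable hG

namespace MeasureTheory

theorem MemLp.coeFn_fourier_toLp {G : V → F} (hG2 : MemLp G 2) (hG1 : Integrable G) :
    ((𝓕 (hG2.toLp G) : Lp F 2) : V → F) =ᵐ[volume] 𝓕 G := by
  refine ae_eq_of_forall_integral_schwartz_smul_eq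
    ((Lp.memLp _).locallyIntegrable (by norm_num))
    (VectorFourier.fourierIntegral_continuous Real.continuous_fourierChar continuous_inner
      hG1).locallyIntegrable fun ψ => ?_
  calc ∫ x, ψ x • ((𝓕 (hG2.toLp G) : Lp F 2 volume) : V → F) x
      = 𝓕 (Lp.toTemperedDistribution (μ := volume) (hG2.toLp G)) ψ := by
        rw [Lp.fourier_toTemperedDistribution_eq, Lp.toTemperedDistribution_apply]
    _ = ∫ ξ, 𝓕 ψ ξ • G ξ := by
        rw [TemperedDistribution.fourier_apply, Lp.toTemperedDistribution_apply]
        exact integral_congr_ae (hG2.coeFn_toLp.mono fun ξ hξ => by simp only [hξ])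
    _ = ∫ x, ψ x • 𝓕 G x := integral_fourier_smul_eq_of_integrable ψ hG1

theorem MemLp.integral_norm_sq_eq {α E : Type*} [MeasurableSpace α] {μ : Measure α}
    [NormedAddCommGroup E] {f : α → E} (hf : MemLp f 2 μ) :
    ∫ x, ‖f x‖ ^ 2 ∂μ = (eLpNorm f 2 μ).toReal ^ 2 := by
  rw [hf.eLpNorm_eq_integral_rpow_norm two_ne_zero ENNReal.ofNat_ne_top]
  have h0 : 0 ≤ ∫ x, ‖f x‖ ^ (2 : ℝ) ∂μ := integral_nonneg fun x => by positivity
  simp only [ENNReal.toReal_ofNat, Real.rpow_two] at h0 ⊢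
  rw [ENNReal.toReal_ofReal (by positivity)]
  exact_mod_cast (Real.rpow_inv_natCast_pow h0 two_ne_zero).symm

theorem MemLp.fourier_of_integrable {G : V → F} (hG2 : MemLp G 2) (hG1 : Integrable G) :
    MemLp (𝓕 G) 2 :=
  (Lp.memLp _).ae_eq (hG2.coeFn_fourier_toLp hG1)

theorem MemLp.integral_norm_sq_fourier {G : V → F} (hG2 : MemLp G 2) (hG1 : Integrable G) :
    ∫ ξ, ‖𝓕 G ξ‖ ^ 2 = ∫ x, ‖G x‖ ^ 2 := by
  have hnorm := Lp.norm_fourier_eq (hG2.toLp G)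
  rw [Lp.norm_def, eLpNorm_congr_ae (hG2.coeFn_fourier_toLp hG1), Lp.norm_toLp] at hnorm
  rw [(hG2.fourier_of_integrable hG1).integral_norm_sq_eq, hG2.integral_norm_sq_eq, hnorm]

end MeasureTheory

end Plancherel

theorem rho_im_nonneg (w : ℂ) : 0 ≤ (rho w).im := by
  simp only [rho, add_im, ofReal_im, mul_im, I_re, I_im, ofReal_re, zero_mul, one_mul, zero_add]
  positivity

@[fun_prop]
theorem continuous_rho : Continuous rho := by
  unfold rho
  fun_prop

theorem Complex.norm_exp_I_mul_le_one {z : ℂ} (hz : 0 ≤ z.im) : ‖exp (I * z)‖ ≤ 1 := by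
  simpa [norm_exp] using hz

noncomputable def asrSpectrum (k : ℂ) (h : ℝ) (F : 𝓢(ℝ, ℂ)) (a : ℝ) (ξ : ℝ) : ℂ :=
  exp (I * (((a - h : ℝ) : ℂ) * rho (k ^ 2 - (ξ : ℂ) ^ 2))) * F ξ

theorem asr_eq_fourier_asrSpectrum (k : ℂ) (h : ℝ) (F : 𝓢(ℝ, ℂ)) (x a : ℝ) :
    asr k h F (x, a) = 𝓕 (asrSpectrum k h F a) (-(2 * Real.pi)⁻¹ * x) := by
  rw [Real.fourier_real_eq_integral_exp_smul, asr]
  refine integral_congr_ae (.of_forall fun ξ => ?_)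
  have : (2 * Real.pi : ℂ) ≠ 0 := by exact_mod_cast Real.two_pi_pos.ne'
  simp only [asrSpectrum, smul_eq_mul, ← mul_assoc, ← exp_add]
  congr 2
  push_cast
  field_simp
  ring

theorem continuous_asrSpectrum (k : ℂ) (h : ℝ) (F : 𝓢(ℝ, ℂ)) (a : ℝ) :
    Continuous (asrSpectrum k h F a) := by
  unfold asrSpectrum
  fun_prop

theorem norm_asrSpectrum_le (k : ℂ) {h a : ℝ} (ha : h ≤ a) (F : 𝓢(ℝ, ℂ)) (ξ : ℝ) :
    ‖asrSpectrum k h F a ξ‖ ≤ ‖F ξ‖ := by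
  rw [asrSpectrum, norm_mul]
  refine mul_le_of_le_one_left (norm_nonneg _) (norm_exp_I_mul_le_one ?_)
  simpa using mul_nonneg (sub_nonneg.2 ha) (rho_im_nonneg _)

theorem memLp_asrSpectrum (k : ℂ) {h a : ℝ} (ha : h ≤ a) (F : 𝓢(ℝ, ℂ)) (p : ENNReal) :
    MemLp (asrSpectrum k h F a) p :=
  (F.memLp p).mono (continuous_asrSpectrum k h F a).aestronglyMeasurable
    (.of_forall (norm_asrSpectrum_le k ha F))

theorem integral_norm_sq_asrSpectrum_le (k : ℂ) {h a : ℝ} (ha : h ≤ a) (F : 𝓢(ℝ, ℂ)) :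
    ∫ ξ, ‖asrSpectrum k h F a ξ‖ ^ 2 ≤ ∫ ξ, ‖F ξ‖ ^ 2 :=
  integral_mono ((memLp_asrSpectrum k ha F 2).integrable_norm_pow two_ne_zero)
    ((F.memLp 2).integrable_norm_pow two_ne_zero)
    fun ξ => pow_le_pow_left₀ (norm_nonneg _) (norm_asrSpectrum_le k ha F ξ) 2

theorem asr_L2_bound_general (k : ℂ) (h : ℝ) (F : SchwartzMap ℝ ℂ)
    (a : ℝ) (ha : h ≤ a) :
    Integrable (fun x₁ : ℝ => ‖asr k h F (x₁, a)‖ ^ 2) ∧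
      ∫ x₁ : ℝ, ‖asr k h F (x₁, a)‖ ^ 2
        ≤ 2 * Real.pi * ∫ ξ : ℝ, ‖F ξ‖ ^ 2 := by
  have hG2 := memLp_asrSpectrum k ha F 2
  have hG1 := memLp_one_iff_integrable.1 (memLp_asrSpectrum k ha F 1)
  have hc : -(2 * Real.pi)⁻¹ ≠ 0 := by simp [Real.pi_ne_zero]
  simp_rw [asr_eq_fourier_asrSpectrum]
  refine ⟨((hG2.fourier_of_integrable hG1).integrable_norm_pow two_ne_zero).comp_mul_left' hc, ?_⟩
  rw [Measure.integral_comp_mul_left (fun y => ‖𝓕 (asrSpectrum k h F a) y‖ ^ 2),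
    hG2.integral_norm_sq_fourier hG1]
  have h2pi : |(-(2 * Real.pi)⁻¹)⁻¹| = 2 * Real.pi := by simp [abs_of_pos Real.pi_pos]
  rw [h2pi, smul_eq_mul]
  exact mul_le_mul_of_nonneg_left (integral_norm_sq_asrSpectrum_le k ha F) Real.two_pi_pos.le

/-- `L²` bound of the angular spectrum representation on horizontal lines: for every
`a ≥ h`, `x₁ ↦ u(x₁,a)` is square integrable on `ℝ` and
`∫ |u(x₁,a)|² dx₁ ≤ 2π ∫ |F(ξ)|² dξ`. -/
theorem asr_L2_bound (k : ℂ) (hk : 0 ≤ (k ^ 2).im) (h : ℝ) (F : SchwartzMap ℝ ℂ)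
    (a : ℝ) (ha : h ≤ a) :
    Integrable (fun x₁ : ℝ => ‖asr k h F (x₁, a)‖ ^ 2) ∧
      ∫ x₁ : ℝ, ‖asr k h F (x₁, a)‖ ^ 2
        ≤ 2 * Real.pi * ∫ ξ : ℝ, ‖F ξ‖ ^ 2 :=
  asr_L2_bound_general k h F a ha
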